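/- (Theorem 2, NL-MSE version.) Let (g_1, x_1), …, (g_M, x_M) be pairs of vectors in ℝ^K, where g_j denotes the gradient of the network loss with respect to the activation vector x_j, and define the K×K real symmetric matrix C = (1/M) ∑_{j=1}^{M} (x_j x_jᵀ g_j g_jᵀ + g_j g_jᵀ x_j x_jᵀ), with eigenvalues sorted decreasingly and corresponding orthonormal eigenvectors v_1, …, v_K. Fix L ≤ K and for an orthonormal family p_1, …, p_L write x̃_j = ∑_{i=1}^{L} ⟨p_i, x_j⟩ p_i and define the NL-MSE upper bound B(p) = 2·(1/M) ∑_j ‖g_j‖²‖x_j‖² − 2·(1/M) ∑_j ⟨g_j, x_j⟩⟨g_j, x̃_j⟩. Then B(p) = 2·(1/M) ∑_j ‖g_j‖²‖x_j‖² − ∑_{i=1}^{L} p_iᵀ C p_i, and B is minimized over all orthonormal families p_1, …, p_L of size L by taking p_i = v_i, the L principal eigenvectors of C. -/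

import Mathlib

/-!
Because `vecMulVec a a * vecMulVec b b` is `a aᵀ b bᵀ`, the quadratic form of `C` at `p` is
`(2 / M) ∑ⱼ ⟪gⱼ, xⱼ⟫ ⟪p, xⱼ⟫ ⟪gⱼ, p⟫`; summed over the family `p` this is exactly the cross
term of the bound, which gives the identity. For the minimisation, expand in the eigenbasis:
`∑ᵢ ⟪pᵢ, C pᵢ⟫ = ∑ₖ λₖ tₖ` with `tₖ = ∑ᵢ ⟪vₖ, pᵢ⟫²`. Bessel's inequality gives `0 ≤ tₖ ≤ 1`
and Parseval's identity `∑ₖ tₖ = L`; for decreasing `λ` such weights give at most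
`λ₁ + ⋯ + λ_L`, which is the value at `pᵢ = vᵢ` (Ky Fan).
-/

open scoped RealInnerProductSpace
open Matrix

/-- The NL-MSE upper bound `B(p)` from Proposition 1, as an empirical average
over the `M` sample pairs `(g_j, x_j)`. -/
noncomputable def nlBound (K L M : ℕ) (g x : Fin M → EuclideanSpace ℝ (Fin K))
    (p : Fin L → EuclideanSpace ℝ (Fin K)) : ℝ :=
  2 * ((M : ℝ)⁻¹ * ∑ j, ‖g j‖ ^ 2 * ‖x j‖ ^ 2)
    - 2 * ((M : ℝ)⁻¹ * ∑ j, ⟪g j, x j⟫ * ⟪g j, ∑ i, ⟪p i, x j⟫ • p i⟫)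

open Finset WithLp

lemma sum_mul_le_sum_of_forall_le {ι : Type*} [Fintype ι] (A : Finset ι) {lam t : ι → ℝ}
    (c : ℝ) (hA : ∀ k ∈ A, c ≤ lam k) (hAc : ∀ k ∉ A, lam k ≤ c)
    (ht0 : ∀ k, 0 ≤ t k) (ht1 : ∀ k, t k ≤ 1) (hsum : ∑ k, t k = #A) :
    ∑ k, lam k * t k ≤ ∑ k ∈ A, lam k := by
  classical
  set s : ι → ℝ := fun k => if k ∈ A then 1 else 0
  have hterm : ∀ k, lam k * t k ≤ lam k * s k + c * (t k - s k) := by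
    intro k
    by_cases hk : k ∈ A
    · simp only [s, if_pos hk]; nlinarith [hA k hk, ht1 k]
    · simp only [s, if_neg hk]; nlinarith [hAc k hk, ht0 k]
  calc ∑ k, lam k * t k ≤ ∑ k, (lam k * s k + c * (t k - s k)) :=
        sum_le_sum fun k _ => hterm k
    _ = ∑ k ∈ A, lam k := by
      simp [s, sum_add_distrib, ← mul_sum, sum_sub_distrib, hsum]

lemma Antitone.exists_separating_castLE {K L : ℕ} (hL : L ≤ K) {lam : Fin K → ℝ}
    (hlam : Antitone lam) :
    ∃ c, (∀ k ∈ univ.map (Fin.castLEEmb hL), c ≤ lam k) ∧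
      ∀ k ∉ univ.map (Fin.castLEEmb hL), lam k ≤ c := by
  have hmem : ∀ k : Fin K, k ∈ univ.map (Fin.castLEEmb hL) ↔ (k : ℕ) < L := fun k => by
    simp only [mem_map, mem_univ, true_and, Fin.castLEEmb_apply]
    exact ⟨fun ⟨i, hi⟩ => hi ▸ i.2, fun hk => ⟨⟨k, hk⟩, rfl⟩⟩
  simp only [hmem, not_lt]
  by_cases hLK : L < K
  · exact ⟨lam ⟨L, hLK⟩, fun k hk => hlam (Fin.mk_le_mk.2 hk.le), fun k hk => hlam hk⟩
  · exact ⟨⨅ k, lam k, fun k _ => ciInf_le (Set.finite_range lam).bddBelow k,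
      fun k hk => absurd (hk.trans_lt k.2) hLK⟩

section Eigenbasis

variable {ι κ E : Type*} [Fintype ι] [Fintype κ]
  [NormedAddCommGroup E] [InnerProductSpace ℝ E]
  {T : E →ₗ[ℝ] E} {b : OrthonormalBasis ι ℝ E} {lam : ι → ℝ} {p : κ → E}

lemma inner_map_self_eq_sum_of_eigenbasis (hT : ∀ k, T (b k) = lam k • b k) (u : E) :
    ⟪u, T u⟫ = ∑ k, lam k * ⟪b k, u⟫ ^ 2 := by
  have hTu : T u = ∑ k, (lam k * ⟪b k, u⟫) • b k := by
    conv_lhs => rw [← b.sum_repr' u]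
    simp [map_sum, hT, smul_smul, mul_comm]
  simp only [hTu, inner_sum, real_inner_smul_right, real_inner_comm u]
  exact sum_congr rfl fun k _ => by ring

lemma Orthonormal.sum_sq_inner_le (hp : Orthonormal ℝ p) (e : E) :
    ∑ i, ⟪e, p i⟫ ^ 2 ≤ ‖e‖ ^ 2 := by
  simpa [real_inner_comm] using hp.sum_inner_products_le (s := univ) e

lemma OrthonormalBasis.sum_sum_sq_inner_orthonormal (b : OrthonormalBasis ι ℝ E)
    (hp : Orthonormal ℝ p) : ∑ k, ∑ i, ⟪b k, p i⟫ ^ 2 = Fintype.card κ := by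
  rw [sum_comm]
  simp [b.sum_sq_inner_right, hp.1]

theorem sum_inner_map_self_le_of_eigenbasis {K L : ℕ} (hL : L ≤ K)
    {b : OrthonormalBasis (Fin K) ℝ E} {lam : Fin K → ℝ} (hlam : Antitone lam)
    (hT : ∀ k, T (b k) = lam k • b k) {p : Fin L → E} (hp : Orthonormal ℝ p) :
    ∑ i, ⟪p i, T (p i)⟫ ≤ ∑ i, ⟪b (Fin.castLE hL i), T (b (Fin.castLE hL i))⟫ := by
  obtain ⟨c, hcA, hcAc⟩ := hlam.exists_separating_castLE hL
  calc ∑ i, ⟪p i, T (p i)⟫ = ∑ k, lam k * ∑ i, ⟪b k, p i⟫ ^ 2 := by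
        simp only [inner_map_self_eq_sum_of_eigenbasis hT, mul_sum]
        exact sum_comm
    _ ≤ ∑ k ∈ univ.map (Fin.castLEEmb hL), lam k := by
        refine sum_mul_le_sum_of_forall_le _ c hcA hcAc
          (fun k => sum_nonneg fun i _ => sq_nonneg _) (fun k => ?_) ?_
        · simpa [b.orthonormal.1 k] using hp.sum_sq_inner_le (b k)
        · simp [b.sum_sum_sq_inner_orthonormal hp]
    _ = ∑ i, lam (Fin.castLE hL i) := sum_map _ _ _
    _ = ∑ i, ⟪b (Fin.castLE hL i), T (b (Fin.castLE hL i))⟫ := by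
        simp [hT, real_inner_smul_right]

end Eigenbasis

lemma dotProduct_mulVec_vecMulVec_mul_vecMulVec {n R : Type*} [Fintype n] [CommSemiring R]
    (a b c d p q : n → R) :
    p ⬝ᵥ ((vecMulVec a b * vecMulVec c d) *ᵥ q) = (p ⬝ᵥ a) * (b ⬝ᵥ c) * (d ⬝ᵥ q) := by
  rw [← mulVec_mulVec, vecMulVec_mulVec, vecMulVec_mulVec]
  simp [dotProduct_smul, mul_comm, mul_left_comm]

lemma EuclideanSpace.real_inner_eq_dotProduct {n : Type*} [Fintype n]
    (u w : EuclideanSpace ℝ n) : ⟪u, w⟫ = ofLp u ⬝ᵥ ofLp w := by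
  rw [EuclideanSpace.inner_eq_star_dotProduct, star_trivial, dotProduct_comm]

lemma dotProduct_mulVec_vecMulVec_symm {n : Type*} [Fintype n] (a b u : EuclideanSpace ℝ n) :
    ofLp u ⬝ᵥ ((vecMulVec (ofLp a) (ofLp a) * vecMulVec (ofLp b) (ofLp b)
      + vecMulVec (ofLp b) (ofLp b) * vecMulVec (ofLp a) (ofLp a)) *ᵥ ofLp u)
      = 2 * ⟪b, a⟫ * (⟪u, a⟫ * ⟪b, u⟫) := by
  simp only [add_mulVec, dotProduct_add, dotProduct_mulVec_vecMulVec_mul_vecMulVec,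
    EuclideanSpace.real_inner_eq_dotProduct]
  rw [dotProduct_comm (ofLp a) (ofLp b), dotProduct_comm (ofLp u) (ofLp b),
    dotProduct_comm (ofLp a) (ofLp u)]
  ring

lemma Matrix.dotProduct_mulVec_eq_inner_toEuclideanLin {n : Type*} [Fintype n] [DecidableEq n]
    (A : Matrix n n ℝ) (u w : EuclideanSpace ℝ n) :
    ofLp u ⬝ᵥ (A *ᵥ ofLp w) = ⟪u, toEuclideanLin A w⟫ := by
  rw [EuclideanSpace.real_inner_eq_dotProduct]
  rfl

theorem nlBound_eq {K L M : ℕ} {g x : Fin M → EuclideanSpace ℝ (Fin K)}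
    {C : Matrix (Fin K) (Fin K) ℝ}
    (hC : C = (M : ℝ)⁻¹ • ∑ j,
      (vecMulVec (x j) (x j) * vecMulVec (g j) (g j)
        + vecMulVec (g j) (g j) * vecMulVec (x j) (x j)))
    (p : Fin L → EuclideanSpace ℝ (Fin K)) :
    nlBound K L M g x p
      = 2 * ((M : ℝ)⁻¹ * ∑ j, ‖g j‖ ^ 2 * ‖x j‖ ^ 2)
        - ∑ i : Fin L, (p i) ⬝ᵥ (C *ᵥ (p i)) := by
  suffices ∑ i : Fin L, (p i) ⬝ᵥ (C *ᵥ (p i))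
      = 2 * ((M : ℝ)⁻¹ * ∑ j, ⟪g j, x j⟫ * ⟪g j, ∑ i, ⟪p i, x j⟫ • p i⟫) by
    rw [nlBound, this]
  simp only [hC, smul_mulVec, sum_mulVec, dotProduct_smul, dotProduct_sum,
    dotProduct_mulVec_vecMulVec_symm, inner_sum, real_inner_smul_right, smul_eq_mul, mul_sum]
  rw [sum_comm]
  refine sum_congr rfl fun j _ => sum_congr rfl fun i _ => ?_
  ring

theorem stmt_11 (K L M : ℕ) (hL : L ≤ K)
    (g x : Fin M → EuclideanSpace ℝ (Fin K))
    (C : Matrix (Fin K) (Fin K) ℝ)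
    (hC : C = (M : ℝ)⁻¹ • ∑ j,
      (vecMulVec (x j) (x j) * vecMulVec (g j) (g j)
        + vecMulVec (g j) (g j) * vecMulVec (x j) (x j)))
    (lam : Fin K → ℝ) (hsort : ∀ i j : Fin K, i ≤ j → lam j ≤ lam i)
    (v : Fin K → EuclideanSpace ℝ (Fin K)) (hv : Orthonormal ℝ v)
    (heig : ∀ i : Fin K, C *ᵥ (v i) = lam i • (v i)) :
    ∀ p : Fin L → EuclideanSpace ℝ (Fin K), Orthonormal ℝ p →
      (nlBound K L M g x p
        = 2 * ((M : ℝ)⁻¹ * ∑ j, ‖g j‖ ^ 2 * ‖x j‖ ^ 2)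
          - ∑ i : Fin L, (p i) ⬝ᵥ (C *ᵥ (p i))) ∧
      nlBound K L M g x (fun i => v (Fin.castLE hL i)) ≤ nlBound K L M g x p := by
  intro p hp
  refine ⟨nlBound_eq hC p, ?_⟩
  let b := OrthonormalBasis.mk hv (hv.linearIndependent.span_eq_top_of_card_eq_finrank'
    (by simp)).ge
  have hT : ∀ k, toEuclideanLin C (b k) = lam k • b k := fun k => by
    simp [b, toEuclideanLin, Matrix.toLpLin_apply, heig]
  have hb : ⇑b = v := OrthonormalBasis.coe_mk _ _
  simp only [nlBound_eq hC, dotProduct_mulVec_eq_inner_toEuclideanLin, ← hb]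
  exact sub_le_sub_left (sum_inner_map_self_le_of_eigenbasis hL hsort hT hp) _
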